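/- arXiv:1508.03574 — 6 statements merged into one kernel-verified Lean document; each statement's English description precedes it below -/
import Mathlib

section
/- If a graph G has an orientation D such that f(v) > d⁺_D(v) for every vertex v and the number of spanning Eulerian sub-digraphs of D with an even number of edges differs from the number with an odd number of edges, then G is f-choosable (i.e., G has a proper coloring from any list assignment L with |L(v)| ≥ f(v) for all v). -/
open scoped Classical

namespace BK

variable {V : Type*} [Fintype V] [DecidableEq V]

/-- Out-degree of a vertex in a digraph given by a finite set of arcs. -/
noncomputable def outDeg (D : Finset (V × V)) (v : V) : ℕ :=
  (D.filter (fun a => a.1 = v)).card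

/-- In-degree of a vertex in a digraph given by a finite set of arcs. -/
noncomputable def inDeg (D : Finset (V × V)) (v : V) : ℕ :=
  (D.filter (fun a => a.2 = v)).card

/-- `D` is an orientation of the edges of `G`: each edge of `G` gets exactly one direction. -/
def IsOrientation (G : SimpleGraph V) (D : Finset (V × V)) : Prop :=
  (∀ u v : V, G.Adj u v ↔ ((u, v) ∈ D ∨ (v, u) ∈ D)) ∧
    ∀ u v : V, (u, v) ∈ D → (v, u) ∉ D

/-- A (spanning) Eulerian sub-digraph: a subset of arcs with in-degree = out-degree everywhere. -/
def IsEulerianSub (D E : Finset (V × V)) : Prop :=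
  E ⊆ D ∧ ∀ v, outDeg E v = inDeg E v

/-- Number of spanning Eulerian sub-digraphs with an even number of arcs. -/
noncomputable def eulerEven (D : Finset (V × V)) : ℕ :=
  (D.powerset.filter (fun E => IsEulerianSub D E ∧ Even E.card)).card

/-- Number of spanning Eulerian sub-digraphs with an odd number of arcs. -/
noncomputable def eulerOdd (D : Finset (V × V)) : ℕ :=
  (D.powerset.filter (fun E => IsEulerianSub D E ∧ Odd E.card)).card

/-- `G` is `f`-AT: it has an Alon–Tarsi orientation for `f`. -/
def IsAT (G : SimpleGraph V) (f : V → ℕ) : Prop :=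
  ∃ D : Finset (V × V), IsOrientation G D ∧ (∀ v, outDeg D v < f v) ∧
    eulerEven D ≠ eulerOdd D

/-- `G` is `f`-choosable: properly colorable from any lists of sizes given by `f`. -/
def Choosable (G : SimpleGraph V) (f : V → ℕ) : Prop :=
  ∀ L : V → Finset ℕ, (∀ v, f v ≤ (L v).card) →
    ∃ c : V → ℕ, (∀ v, c v ∈ L v) ∧ ∀ u v, G.Adj u v → c u ≠ c v

/-- The induced subdigraph of `D` on `S` has a kernel. -/
def HasKernel (D : Finset (V × V)) (S : Finset V) : Prop :=
  ∃ I ⊆ S, (∀ u ∈ I, ∀ v ∈ I, (u, v) ∉ D) ∧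
    ∀ v ∈ S, v ∉ I → ∃ w ∈ I, (v, w) ∈ D

/-- Every induced subdigraph of `D` has a kernel. -/
def KernelPerfect (D : Finset (V × V)) : Prop :=
  ∀ S : Finset V, HasKernel D S

/-- `G` is `f`-KP: some loopless superdigraph of `G` (bidirected arcs allowed) is
kernel-perfect with all out-degrees less than `f`. -/
def IsKP (G : SimpleGraph V) (f : V → ℕ) : Prop :=
  ∃ D : Finset (V × V), (∀ a ∈ D, a.1 ≠ a.2) ∧
    (∀ u v, G.Adj u v → (u, v) ∈ D ∨ (v, u) ∈ D) ∧
    KernelPerfect D ∧ ∀ v, outDeg D v < f v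

end BK

/-!
The Alon–Tarsi argument. The graph polynomial `∏_{(u,v) ∈ D} (X u - X v)` is nonzero at `x`
exactly when `x` is a proper colouring. Expanding the product by choosing the head of the arcs
in `E ⊆ D` and the tail of the others, the monomial `∏ X v ^ d⁺(v)` arises exactly when `E` is
Eulerian, with sign `(-1)^|E|`; so its coefficient is `eulerEven D - eulerOdd D ≠ 0`. Its degree
`|D|` is the total degree, and the Combinatorial Nullstellensatz gives a nonvanishing point with
`x v ∈ L v`, because `d⁺(v) < f v ≤ |L v|`.
-/

namespace BK

open MvPolynomial Finset

variable {V : Type*}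

lemma IsOrientation.ne_of_adj {G : SimpleGraph V} {D : Finset (V × V)} (hD : IsOrientation G D)
    {β : Type*} {x : V → β} (hx : ∀ a ∈ D, x a.1 ≠ x a.2) {u v : V} (huv : G.Adj u v) :
    x u ≠ x v := by
  rcases (hD.1 u v).mp huv with h | h
  · exact hx _ h
  · exact (hx _ h).symm

section GraphPolynomial

variable {R : Type*} [CommRing R]

noncomputable def graphPoly (D : Finset (V × V)) : MvPolynomial V R :=
  ∏ a ∈ D, (X a.1 - X a.2)

noncomputable def outDegVec (D : Finset (V × V)) : V →₀ ℕ :=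
  ∑ a ∈ D, Finsupp.single a.1 1

noncomputable def inDegVec (D : Finset (V × V)) : V →₀ ℕ :=
  ∑ a ∈ D, Finsupp.single a.2 1

lemma outDegVec_apply [DecidableEq V] (D : Finset (V × V)) (v : V) :
    outDegVec D v = outDeg D v := by
  rw [outDeg, card_filter, outDegVec, Finsupp.finsetSum_apply]
  simp only [Finsupp.single_apply]

lemma inDegVec_apply [DecidableEq V] (D : Finset (V × V)) (v : V) :
    inDegVec D v = inDeg D v := by
  rw [inDeg, card_filter, inDegVec, Finsupp.finsetSum_apply]
  simp only [Finsupp.single_apply]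

lemma degree_outDegVec (D : Finset (V × V)) : (outDegVec D).degree = #D := by
  simp [outDegVec, Finsupp.degree_single]

lemma outDegVec_sdiff_add [DecidableEq V] {D E : Finset (V × V)} (hE : E ⊆ D) :
    outDegVec (D \ E) + outDegVec E = outDegVec D :=
  sum_sdiff hE

lemma inDegVec_add_outDegVec_sdiff_eq_iff [DecidableEq V] {D E : Finset (V × V)} (hE : E ⊆ D) :
    inDegVec E + outDegVec (D \ E) = outDegVec D ↔ IsEulerianSub D E := by
  rw [← outDegVec_sdiff_add hE, add_comm (outDegVec _), add_left_inj, IsEulerianSub,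
    Finsupp.ext_iff]
  simp only [inDegVec_apply, outDegVec_apply, hE, true_and, eq_comm]

lemma graphPoly_eq_sum_powerset [DecidableEq V] (D : Finset (V × V)) :
    (graphPoly D : MvPolynomial V R) =
      ∑ E ∈ D.powerset, monomial (inDegVec E + outDegVec (D \ E)) ((-1 : R) ^ #E) := by
  have hsplit : ∀ a : V × V, (X a.1 - X a.2 : MvPolynomial V R) = -X a.2 + X a.1 :=
    fun a => by ring
  simp_rw [graphPoly, hsplit, prod_add, prod_neg]
  refine sum_congr rfl fun E _ => ?_
  rw [← mul_one ((-1 : R) ^ #E), ← monomial_mul, ← mul_one ((-1 : R) ^ #E), ← C_mul_monomial,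
    inDegVec, outDegVec, monomial_sum_one, monomial_sum_one]
  simp [X]

lemma sum_neg_one_pow_card_eulerian [DecidableEq V] (D : Finset (V × V)) :
    ∑ E ∈ D.powerset with IsEulerianSub D E, (-1 : R) ^ #E = eulerEven D - eulerOdd D := by
  rw [← sum_filter_add_sum_filter_not _ (fun E => Even #E), filter_filter, filter_filter]
  simp_rw [Nat.not_even_iff_odd]
  rw [sum_congr rfl fun E hE => ((mem_filter.mp hE).2.2.neg_one_pow : (-1 : R) ^ #E = 1),
    sum_congr rfl fun E hE => ((mem_filter.mp hE).2.2.neg_one_pow : (-1 : R) ^ #E = -1)]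
  simp [eulerEven, eulerOdd, sub_eq_add_neg]

theorem coeff_outDegVec_graphPoly [DecidableEq V] (D : Finset (V × V)) :
    (graphPoly D : MvPolynomial V R).coeff (outDegVec D) = eulerEven D - eulerOdd D := by
  rw [graphPoly_eq_sum_powerset, coeff_sum, ← sum_neg_one_pow_card_eulerian, sum_filter]
  refine sum_congr rfl fun E hE => ?_
  simp only [coeff_monomial, inDegVec_add_outDegVec_sdiff_eq_iff (mem_powerset.mp hE)]

lemma totalDegree_X_le (v : V) : (X v : MvPolynomial V R).totalDegree ≤ 1 :=
  (totalDegree_monomial_le _ _).trans_eq (Finsupp.degree_single v 1)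

lemma totalDegree_graphPoly_le (D : Finset (V × V)) :
    (graphPoly D : MvPolynomial V R).totalDegree ≤ #D := by
  refine (totalDegree_finsetProd _ _).trans ?_
  simpa using sum_le_card_nsmul D _ 1 fun a _ =>
    (totalDegree_sub _ _).trans (max_le (totalDegree_X_le a.1) (totalDegree_X_le a.2))

lemma eval_graphPoly_ne_zero_iff [IsDomain R] (D : Finset (V × V)) (x : V → R) :
    eval x (graphPoly D) ≠ 0 ↔ ∀ a ∈ D, x a.1 ≠ x a.2 := by
  simp [graphPoly, prod_ne_zero_iff, sub_eq_zero]

end GraphPolynomial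

end BK

open MvPolynomial Finset BK in
/-- Alon–Tarsi theorem: an orientation with small out-degrees and differing numbers of
even and odd spanning Eulerian sub-digraphs implies `f`-choosability. -/
theorem stmt0 {V : Type*} [Fintype V] [DecidableEq V] (G : SimpleGraph V) (f : V → ℕ)
    (D : Finset (V × V)) (hor : BK.IsOrientation G D)
    (hout : ∀ v, f v > BK.outDeg D v)
    (heul : BK.eulerEven D ≠ BK.eulerOdd D) :
    BK.Choosable G f := by
  intro L hL
  have hcoeff : (graphPoly D : MvPolynomial V ℤ).coeff (outDegVec D) ≠ 0 := by
    rw [coeff_outDegVec_graphPoly, sub_ne_zero]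
    exact_mod_cast heul
  have hdeg : (graphPoly D : MvPolynomial V ℤ).totalDegree = (outDegVec D).degree :=
    le_antisymm (degree_outDegVec D ▸ totalDegree_graphPoly_le D)
      (le_totalDegree (mem_support_iff.mpr hcoeff))
  obtain ⟨x, hxL, hx⟩ := combinatorial_nullstellensatz_exists_eval_nonzero _ _ hcoeff hdeg
    (fun v => (L v).image (Nat.cast : ℕ → ℤ)) fun v => by
      rw [card_image_of_injective _ Nat.cast_injective, outDegVec_apply]
      exact (hout v).trans_le (hL v)
  choose c hcL hcx using fun v => mem_image.mp (hxL v)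
  refine ⟨c, hcL, fun u v huv hc => ?_⟩
  refine hor.ne_of_adj ((eval_graphPoly_ne_zero_iff D x).mp hx) huv ?_
  rw [← hcx, ← hcx, hc]
end

section
/- If D is a kernel-perfect orientation of a graph G and f(v) > d⁺_D(v) for every vertex v, then G is f-choosable. -/
open scoped Classical

/-!
Bondy–Boppana–Siegel. Induct on the set `S` of vertices still to be coloured, with lists `L`
longer than the out-degrees in `D[S]`. Pick a colour `α` occurring in some list and a kernel `I`
of the subdigraph induced on the vertices whose list contains `α`. Colour `I` with `α` (possible
since `I` is independent) and delete `α` from all other lists. A vertex of `S \ I` that loses `α`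
has an out-neighbour in `I`, so its out-degree into `S \ I` drops by at least one as well, and the
invariant survives.
-/

namespace BK

variable {V : Type*} [DecidableEq V]

def induce (D : Finset (V × V)) (S : Finset V) : Finset (V × V) :=
  D.filter fun a => a.1 ∈ S ∧ a.2 ∈ S

def IsListColoring (D : Finset (V × V)) (S : Finset V) (L : V → Finset ℕ) (c : V → ℕ) : Prop :=
  (∀ v ∈ S, c v ∈ L v) ∧ ∀ u ∈ S, ∀ v ∈ S, (u, v) ∈ D → c u ≠ c v

lemma induce_mono {D : Finset (V × V)} {S T : Finset V} (h : S ⊆ T) :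
    induce D S ⊆ induce D T := by
  intro a ha
  simp only [induce, Finset.mem_filter] at ha ⊢
  exact ⟨ha.1, h ha.2.1, h ha.2.2⟩

lemma outDeg_mono {E F : Finset (V × V)} (h : E ⊆ F) (v : V) : outDeg E v ≤ outDeg F v :=
  Finset.card_le_card (Finset.filter_subset_filter _ h)

lemma outDeg_lt_outDeg {E F : Finset (V × V)} (h : E ⊆ F) {a : V × V} (haF : a ∈ F)
    (haE : a ∉ E) : outDeg E a.1 < outDeg F a.1 :=
  Finset.card_lt_card <| (Finset.ssubset_iff_of_subset (Finset.filter_subset_filter _ h)).2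
    ⟨a, Finset.mem_filter.2 ⟨haF, rfl⟩, fun ha => haE (Finset.mem_filter.1 ha).1⟩

lemma outDeg_induce_sdiff_lt_card_erase {D : Finset (V × V)} {S I : Finset V} {L : Finset ℕ}
    {α : ℕ} {v : V} (hv : v ∈ S \ I) (hI : I ⊆ S) (hdeg : outDeg (induce D S) v < L.card)
    (hout : α ∈ L → ∃ w ∈ I, (v, w) ∈ D) :
    outDeg (induce D (S \ I)) v < (L.erase α).card := by
  have hsub : induce D (S \ I) ⊆ induce D S := induce_mono Finset.sdiff_subset
  by_cases hα : α ∈ L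
  · obtain ⟨w, hwI, hvw⟩ := hout hα
    have hvS := (Finset.mem_sdiff.1 hv).1
    have hlt : outDeg (induce D (S \ I)) v < outDeg (induce D S) v :=
      outDeg_lt_outDeg (a := (v, w)) hsub (Finset.mem_filter.2 ⟨hvw, hvS, hI hwI⟩)
        fun h => (Finset.mem_sdiff.1 (Finset.mem_filter.1 h).2.2).2 hwI
    rw [Finset.card_erase_of_mem hα]
    omega
  · rw [Finset.erase_eq_of_notMem hα]
    exact (outDeg_mono hsub v).trans_lt hdeg

lemma IsListColoring.ite_of_independent {D : Finset (V × V)} {S I : Finset V}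
    {L : V → Finset ℕ} {α : ℕ} {c : V → ℕ}
    (hc : IsListColoring D (S \ I) (fun v => (L v).erase α) c)
    (hIS : I ⊆ S.filter (α ∈ L ·)) (hIind : ∀ u ∈ I, ∀ v ∈ I, (u, v) ∉ D) :
    IsListColoring D S L (fun v => if v ∈ I then α else c v) := by
  have hne : ∀ v ∈ S, v ∉ I → c v ≠ α := fun v hvS hvI =>
    Finset.ne_of_mem_erase (hc.1 v (Finset.mem_sdiff.2 ⟨hvS, hvI⟩))
  refine ⟨fun v hvS => ?_, fun u huS v hvS huv => ?_⟩
  · by_cases hvI : v ∈ I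
    · simpa [hvI] using (Finset.mem_filter.1 (hIS hvI)).2
    · simpa [hvI] using Finset.mem_of_mem_erase (hc.1 v (Finset.mem_sdiff.2 ⟨hvS, hvI⟩))
  · by_cases huI : u ∈ I <;> by_cases hvI : v ∈ I <;> simp only [huI, hvI, if_true, if_false]
    · exact absurd huv (hIind u huI v hvI)
    · exact (hne v hvS hvI).symm
    · exact hne u huS huI
    · exact hc.2 u (Finset.mem_sdiff.2 ⟨huS, huI⟩) v (Finset.mem_sdiff.2 ⟨hvS, hvI⟩) huv

theorem exists_isListColoring_of_kernelPerfect {D : Finset (V × V)} (hD : KernelPerfect D)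
    (S : Finset V) (L : V → Finset ℕ) (hL : ∀ v ∈ S, outDeg (induce D S) v < (L v).card) :
    ∃ c, IsListColoring D S L c := by
  induction S using Finset.strongInduction generalizing L with
  | H S ih =>
  obtain rfl | ⟨v₀, hv₀⟩ := S.eq_empty_or_nonempty
  · exact ⟨fun _ => 0, by simp [IsListColoring]⟩
  obtain ⟨α, hα⟩ := Finset.card_pos.1 (Nat.zero_lt_of_lt (hL v₀ hv₀))
  obtain ⟨I, hIS, hIind, hIabs⟩ := hD (S.filter (α ∈ L ·))
  have hI : I.Nonempty := by
    by_cases h : v₀ ∈ I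
    · exact ⟨v₀, h⟩
    · obtain ⟨w, hw, -⟩ := hIabs v₀ (Finset.mem_filter.2 ⟨hv₀, hα⟩) h
      exact ⟨w, hw⟩
  have hIS' : I ⊆ S := hIS.trans (Finset.filter_subset _ _)
  obtain ⟨c, hc⟩ := ih (S \ I) (Finset.sdiff_ssubset hIS' hI) (fun v => (L v).erase α)
    fun v hv => outDeg_induce_sdiff_lt_card_erase hv hIS' (hL v (Finset.mem_sdiff.1 hv).1)
      fun hαv => hIabs v (Finset.mem_filter.2 ⟨(Finset.mem_sdiff.1 hv).1, hαv⟩)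
        (Finset.mem_sdiff.1 hv).2
  exact ⟨_, hc.ite_of_independent hIS hIind⟩

end BK

/-- Bondy–Boppana–Siegel: a kernel-perfect orientation with out-degrees below `f`
implies `f`-choosability. -/
theorem stmt1 {V : Type*} [Fintype V] [DecidableEq V] (G : SimpleGraph V) (f : V → ℕ)
    (D : Finset (V × V)) (hor : BK.IsOrientation G D)
    (hkp : BK.KernelPerfect D)
    (hout : ∀ v, f v > BK.outDeg D v) :
    BK.Choosable G f := by
  intro L hL
  obtain ⟨c, hcL, hcD⟩ := BK.exists_isListColoring_of_kernelPerfect hkp Finset.univ L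
    fun v _ => (BK.outDeg_mono (Finset.filter_subset _ D) v).trans_lt ((hout v).trans_le (hL v))
  refine ⟨c, fun v => hcL v (Finset.mem_univ v), fun u v huv => ?_⟩
  rcases (hor.1 u v).1 huv with h | h
  · exact hcD u (Finset.mem_univ u) v (Finset.mem_univ v) h
  · exact (hcD v (Finset.mem_univ v) u (Finset.mem_univ u) h).symm
end

section
/- If a graph G is f-AT and e is an edge of G, then the graph G − e is also f-AT (with the same function f). -/
open scoped Classical

/-! Write `S(X, g) = ∑ (-1)^|E|` over the sub-digraphs `E ⊆ X` with net in-degree vector `g`, so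
that an orientation `D` is Alon–Tarsi exactly when `S(D, 0) ≠ 0`. Reversing the arcs of some
`E ⊆ X` induces a bijection between sub-digraphs of `X` and of the reoriented digraph (`F ↦ F Δ E`,
with the arcs of `E` turned around), which gives `S(X with E reversed, g) = ±S(X, g + netIn E)`.

Let `a = (u, v) ∈ D`. Splitting the sub-digraphs of `D` by whether they contain `a` gives
`S(D, 0) = S(D - a, 0) - S(D - a, -netIn a)`. If the first term is nonzero, `D - a` is already an
Alon–Tarsi orientation of `G - e`. Otherwise some `E ⊆ D - a` with `E + a` Eulerian has
`S(D - a, netIn E) ≠ 0`, and reversing `E` in `D - a` gives an Alon–Tarsi orientation of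
`G - e` whose out-degrees are those of `D`, except one less at `v`. -/

namespace BK

open Finset

variable {V : Type*} [DecidableEq V]

def reverse (E : Finset (V × V)) : Finset (V × V) := E.image Prod.swap

@[simp] lemma mem_reverse {E : Finset (V × V)} {x : V × V} :
    x ∈ reverse E ↔ x.swap ∈ E := by
  simp [reverse, Prod.swap_eq_iff_eq_swap]

@[simp] lemma reverse_reverse (E : Finset (V × V)) : reverse (reverse E) = E := by
  ext; simp

lemma card_reverse (E : Finset (V × V)) : #(reverse E) = #E :=
  card_image_of_injective _ Prod.swap_injective

noncomputable def netIn (E : Finset (V × V)) (w : V) : ℤ := inDeg E w - outDeg E w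

lemma outDeg_union {A B : Finset (V × V)} (h : Disjoint A B) (w : V) :
    outDeg (A ∪ B) w = outDeg A w + outDeg B w := by
  rw [outDeg, filter_union, card_union_of_disjoint (disjoint_filter_filter h)]; rfl

lemma inDeg_union {A B : Finset (V × V)} (h : Disjoint A B) (w : V) :
    inDeg (A ∪ B) w = inDeg A w + inDeg B w := by
  rw [inDeg, filter_union, card_union_of_disjoint (disjoint_filter_filter h)]; rfl

lemma outDeg_sdiff_add {A B : Finset (V × V)} (h : A ⊆ B) (w : V) :
    outDeg (B \ A) w + outDeg A w = outDeg B w := by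
  rw [← outDeg_union sdiff_disjoint, sdiff_union_of_subset h]

lemma outDeg_mono_s2 {A B : Finset (V × V)} (h : A ⊆ B) (w : V) : outDeg A w ≤ outDeg B w :=
  card_le_card (filter_subset_filter _ h)

lemma outDeg_reverse (E : Finset (V × V)) (w : V) : outDeg (reverse E) w = inDeg E w := by
  rw [outDeg, inDeg, reverse, filter_image, card_image_of_injective _ Prod.swap_injective]; rfl

lemma inDeg_reverse (E : Finset (V × V)) (w : V) : inDeg (reverse E) w = outDeg E w := by
  rw [← outDeg_reverse, reverse_reverse]

lemma netIn_union {A B : Finset (V × V)} (h : Disjoint A B) :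
    netIn (A ∪ B) = netIn A + netIn B := by
  ext w; simp only [netIn, Pi.add_apply, inDeg_union h, outDeg_union h]; push_cast; ring

lemma netIn_sdiff_add_inter (A B : Finset (V × V)) :
    netIn (A \ B) + netIn (A ∩ B) = netIn A := by
  rw [← netIn_union (disjoint_sdiff_inter A B), sdiff_union_inter]

lemma netIn_reverse (E : Finset (V × V)) : netIn (reverse E) = -netIn E := by
  ext w; simp only [netIn, Pi.neg_apply, inDeg_reverse, outDeg_reverse]; ring

lemma netIn_eq_zero_iff {E : Finset (V × V)} :
    netIn E = 0 ↔ ∀ v, outDeg E v = inDeg E v := by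
  simp only [funext_iff, netIn, Pi.zero_apply, sub_eq_zero, Nat.cast_inj, eq_comm]

noncomputable def signedCount (X : Finset (V × V)) (g : V → ℤ) : ℤ :=
  ∑ E ∈ X.powerset with netIn E = g, (-1) ^ #E

lemma signedCount_zero (D : Finset (V × V)) :
    signedCount D 0 = (eulerEven D : ℤ) - eulerOdd D := by
  have hEuler : signedCount D 0 = ∑ E ∈ D.powerset with IsEulerianSub D E, (-1 : ℤ) ^ #E := by
    refine sum_congr (filter_congr fun E hE => ?_) fun _ _ => rfl
    rw [netIn_eq_zero_iff, IsEulerianSub, and_iff_right (mem_powerset.mp hE)]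
  rw [hEuler, eulerEven, eulerOdd]
  simp only [neg_one_pow_eq_ite, sum_ite, filter_filter, sum_const, Nat.not_even_iff_odd]
  simp [sub_eq_add_neg]

lemma signedCount_insert {X : Finset (V × V)} {a : V × V} (ha : a ∉ X) (g : V → ℤ) :
    signedCount (insert a X) g = signedCount X g - signedCount X (g - netIn {a}) := by
  simp only [signedCount, sum_filter]
  rw [sum_powerset_insert ha, sub_eq_add_neg, ← sum_neg_distrib]
  refine congrArg _ (sum_congr rfl fun E hE => ?_)
  have haE : a ∉ E := fun h => ha (mem_powerset.mp hE h)
  have hnet : netIn (insert a E) = netIn E + netIn {a} := by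
    rw [insert_eq, union_comm, netIn_union (disjoint_singleton_right.mpr haE)]
  rw [hnet, card_insert_of_notMem haE, pow_succ, eq_sub_iff_add_eq]
  split_ifs <;> simp

def IsOriented (X : Finset (V × V)) : Prop := ∀ u v, (u, v) ∈ X → (v, u) ∉ X

def reorient (X E : Finset (V × V)) : Finset (V × V) := (X \ E) ∪ reverse E

/-- For `E, F ⊆ X`, the sub-digraph of `reorient X E` matching `F`: the arcs of `F` outside `E`
together with the reversals of the arcs of `E` outside `F`. -/
def reorientSub (E F : Finset (V × V)) : Finset (V × V) := (F \ E) ∪ reverse (E \ F)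

section Reorient

variable {X E F : Finset (V × V)}

lemma disjoint_reverse (hX : IsOriented X) (hE : E ⊆ X) : Disjoint X (reverse E) :=
  disjoint_left.mpr fun ⟨u, v⟩ hx hx' => hX u v hx (hE (mem_reverse.mp hx'))

lemma IsOriented.reorient (hX : IsOriented X) (hE : E ⊆ X) : IsOriented (reorient X E) := by
  intro u v
  have := hX u v; have := hX v u; have := @hE (u, v); have := @hE (v, u)
  simp only [BK.reorient, mem_union, mem_sdiff, mem_reverse, Prod.swap_prod_mk]
  tauto

lemma reorient_reorient (hX : IsOriented X) (hE : E ⊆ X) :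
    reorient (reorient X E) (reverse E) = X := by
  ext ⟨u, v⟩
  have := hX u v; have := @hE (u, v); have := @hE (v, u)
  simp only [reorient, mem_union, mem_sdiff, mem_reverse, Prod.swap_prod_mk, reverse_reverse]
  tauto

lemma reorientSub_subset (hF : F ⊆ X) : reorientSub E F ⊆ reorient X E :=
  union_subset_union (sdiff_subset_sdiff hF le_rfl) (image_subset_image sdiff_subset)

lemma reorientSub_reorientSub (hX : IsOriented X) (hE : E ⊆ X) (hF : F ⊆ X) :
    reorientSub (reverse E) (reorientSub E F) = F := by
  ext ⟨u, v⟩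
  have := hX u v; have := @hE (u, v); have := @hE (v, u); have := @hF (u, v); have := @hF (v, u)
  simp only [reorientSub, mem_union, mem_sdiff, mem_reverse, Prod.swap_prod_mk]
  tauto

lemma disjoint_sdiff_reverse_sdiff (h : Disjoint F (reverse E)) :
    Disjoint (F \ E) (reverse (E \ F)) :=
  h.mono sdiff_subset (image_subset_image sdiff_subset)

lemma netIn_reorientSub (h : Disjoint F (reverse E)) :
    netIn (reorientSub E F) = netIn F - netIn E := by
  rw [reorientSub, netIn_union (disjoint_sdiff_reverse_sdiff h), netIn_reverse,
    ← netIn_sdiff_add_inter F E, ← netIn_sdiff_add_inter E F, inter_comm]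
  abel

lemma neg_one_pow_card_reorientSub (h : Disjoint F (reverse E)) :
    (-1 : ℤ) ^ #(reorientSub E F) = (-1) ^ #E * (-1) ^ #F := by
  have hcard : #E + #F = #(reorientSub E F) + 2 * #(E ∩ F) := by
    have := card_sdiff_add_card_inter F E
    have := card_sdiff_add_card_inter E F
    rw [reorientSub, card_union_of_disjoint (disjoint_sdiff_reverse_sdiff h), card_reverse,
      inter_comm F E] at *
    omega
  rw [← pow_add, hcard, pow_add, pow_mul]
  simp

lemma signedCount_reorient (hX : IsOriented X) (hE : E ⊆ X) (g : V → ℤ) :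
    signedCount (reorient X E) g = (-1) ^ #E * signedCount X (g + netIn E) := by
  have hXr : IsOriented (reorient X E) := hX.reorient hE
  have hEr : reverse E ⊆ reorient X E := subset_union_right
  rw [signedCount, signedCount, mul_sum]
  symm
  refine sum_nbij' (reorientSub E) (reorientSub (reverse E)) ?_ ?_ ?_ ?_ ?_
  · intro F hF
    simp only [mem_filter, mem_powerset] at hF ⊢
    refine ⟨reorientSub_subset hF.1, ?_⟩
    rw [netIn_reorientSub ((disjoint_reverse hX hE).mono_left hF.1), hF.2, add_sub_cancel_right]
  · intro F hF
    simp only [mem_filter, mem_powerset] at hF ⊢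
    refine ⟨reorient_reorient hX hE ▸ reorientSub_subset hF.1, ?_⟩
    rw [netIn_reorientSub ((disjoint_reverse hXr hEr).mono_left hF.1), netIn_reverse, hF.2,
      sub_neg_eq_add]
  · intro F hF
    exact reorientSub_reorientSub hX hE (mem_powerset.mp (mem_filter.mp hF).1)
  · intro F hF
    simpa using reorientSub_reorientSub hXr hEr (mem_powerset.mp (mem_filter.mp hF).1)
  · intro F hF
    rw [neg_one_pow_card_reorientSub
      ((disjoint_reverse hX hE).mono_left (mem_powerset.mp (mem_filter.mp hF).1))]

lemma outDeg_reorient (hX : IsOriented X) (hE : E ⊆ X) (w : V) :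
    (outDeg (reorient X E) w : ℤ) = outDeg X w + netIn E w := by
  rw [reorient, outDeg_union ((disjoint_reverse hX hE).mono_left sdiff_subset), outDeg_reverse,
    ← outDeg_sdiff_add hE w, netIn]
  push_cast
  ring

lemma exists_signedCount_reorient_ne_zero (hX : IsOriented X) {g : V → ℤ}
    (h : signedCount X g ≠ 0) : ∃ E ⊆ X, netIn E = g ∧ signedCount (reorient X E) 0 ≠ 0 := by
  obtain ⟨E, hE, -⟩ := exists_ne_zero_of_sum_ne_zero h
  rw [mem_filter, mem_powerset] at hE
  refine ⟨E, hE.1, hE.2, ?_⟩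
  rw [signedCount_reorient hX hE.1, zero_add, hE.2]
  exact mul_ne_zero (pow_ne_zero _ (by norm_num)) h

end Reorient

section Orientation

variable {G : SimpleGraph V} {D E : Finset (V × V)}

lemma IsOrientation.reorient (hD : IsOrientation G D) (hE : E ⊆ D) :
    IsOrientation G (reorient D E) := by
  refine ⟨fun u v => ?_, IsOriented.reorient hD.2 hE⟩
  have := @hE (u, v); have := @hE (v, u)
  rw [hD.1 u v]
  simp only [BK.reorient, mem_union, mem_sdiff, mem_reverse, Prod.swap_prod_mk]
  tauto

lemma IsOrientation.erase {u v : V} (hD : IsOrientation G D) (huv : (u, v) ∈ D) :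
    IsOrientation (G.deleteEdges {s(u, v)}) (D.erase (u, v)) := by
  refine ⟨fun p q => ?_,
    fun p q hpq hqp => hD.2 p q (mem_of_mem_erase hpq) (mem_of_mem_erase hqp)⟩
  have hvu := hD.2 u v huv
  rw [SimpleGraph.deleteEdges_adj, Set.mem_singleton_iff, hD.1 p q, Sym2.eq_iff, mem_erase,
    mem_erase]
  aesop

lemma isAT_of_signedCount_ne_zero {f : V → ℕ} (hD : IsOrientation G D)
    (hf : ∀ v, outDeg D v < f v) (hS : signedCount D 0 ≠ 0) : IsAT G f :=
  ⟨D, hD, hf, fun h => hS (by rw [signedCount_zero, h, sub_self])⟩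

theorem isAT_deleteEdges_of_mem {f : V → ℕ} {u v : V} (hD : IsOrientation G D)
    (hf : ∀ w, outDeg D w < f w) (hS : signedCount D 0 ≠ 0) (huv : (u, v) ∈ D) :
    IsAT (G.deleteEdges {s(u, v)}) f := by
  set D' := D.erase (u, v)
  have hD' : IsOrientation (G.deleteEdges {s(u, v)}) D' := hD.erase huv
  have hsplit : signedCount D 0 = signedCount D' 0 - signedCount D' (-netIn {(u, v)}) := by
    simpa [D', insert_erase huv] using signedCount_insert (notMem_erase (u, v) D) 0
  by_cases h0 : signedCount D' 0 = 0
  · have hS' : signedCount D' (-netIn {(u, v)}) ≠ 0 := by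
      rwa [hsplit, h0, zero_sub, neg_ne_zero] at hS
    obtain ⟨E, hE, hnet, hSE⟩ := exists_signedCount_reorient_ne_zero hD'.2 hS'
    refine isAT_of_signedCount_ne_zero (hD'.reorient hE) (fun w => ?_) hSE
    have hreorient := outDeg_reorient hD'.2 hE w
    have herase : outDeg D' w + outDeg {(u, v)} w = outDeg D w := by
      rw [← outDeg_sdiff_add (singleton_subset_iff.mpr huv), ← erase_eq]
    rw [hnet, Pi.neg_apply, netIn] at hreorient
    have := hf w
    omega
  · exact isAT_of_signedCount_ne_zero hD'
      (fun w => (outDeg_mono_s2 (erase_subset _ _) w).trans_lt (hf w)) h0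

end Orientation

end BK

theorem stmt2_general {V : Type*} [DecidableEq V] (G : SimpleGraph V) (f : V → ℕ)
    (hG : BK.IsAT G f) (e : Sym2 V) (he : e ∈ G.edgeSet) :
    BK.IsAT (G.deleteEdges {e}) f := by
  obtain ⟨D, hD, hf, hEO⟩ := hG
  have hS : BK.signedCount D 0 ≠ 0 := by
    rw [BK.signedCount_zero, sub_ne_zero]
    exact_mod_cast hEO
  induction e using Sym2.ind with
  | _ u v =>
    rcases (hD.1 u v).mp he with huv | hvu
    · exact BK.isAT_deleteEdges_of_mem hD hf hS huv
    · rw [Sym2.eq_swap]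
      exact BK.isAT_deleteEdges_of_mem hD hf hS hvu

/-- If `G` is `f`-AT and `e ∈ E(G)`, then `G − e` is `f`-AT. -/
theorem stmt2 {V : Type*} [Fintype V] [DecidableEq V] (G : SimpleGraph V) (f : V → ℕ)
    (hG : BK.IsAT G f) (e : Sym2 V) (he : e ∈ G.edgeSet) :
    BK.IsAT (G.deleteEdges {e}) f :=
  stmt2_general G f hG e he
end

section
/- Let g ∈ F[x_1,…,x_n] be a polynomial and k_1,…,k_n ∈ ℕ with k_1+⋯+k_n = deg(g). For any subsets C_1,…,C_n ⊆ F with |C_i| = k_i + 1, the coefficient of x_1^{k_1}⋯x_n^{k_n} in g equals the sum over all (c_1,…,c_n) ∈ C_1×⋯×C_n of g(c_1,…,c_n)/N(c_1,…,c_n), where N(c_1,…,c_n) = ∏_{i=1}^n ∏_{d ∈ C_i∖{c_i}} (c_i − d). -/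
/-!
Dividing `g(c)` by `N(c)` and summing over the grid factorises, monomial by monomial, into
products of one-variable sums `∑_{x ∈ C_i} x ^ a / ∏_{d ∈ C_i \ {x}} (x - d)`. By Lagrange
interpolation such a sum is the coefficient of `X ^ (|C_i| - 1)` in `X ^ a` whenever
`a < |C_i|`, i.e. it is `1` for `a = k_i` and `0` for `a < k_i`. Since `g` has total degree
`∑ k_i`, every monomial `x ^ a` of `g` other than `x ^ k` has some `a_i < k_i`, so only the
coefficient of `x ^ k` survives.
-/

open Finset

theorem sum_pow_div_prod_sub {F : Type*} [Field F] [DecidableEq F] {s : Finset F} {a : ℕ}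
    (ha : a < #s) :
    ∑ c ∈ s, c ^ a / ∏ d ∈ s.erase c, (c - d) = if a + 1 = #s then 1 else 0 := by
  have hdeg : (Polynomial.X ^ a : Polynomial F).degree < #s := by
    rw [Polynomial.degree_X_pow]
    exact_mod_cast ha
  have h := Lagrange.coeff_eq_sum (v := id) Function.injective_id.injOn hdeg
  simp only [Polynomial.coeff_X_pow, Polynomial.eval_pow, Polynomial.eval_X, id] at h
  rw [← h]
  exact if_congr (by omega) rfl rfl

theorem exists_lt_of_sum_le_of_ne {σ : Type*} [Fintype σ] {a k : σ → ℕ}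
    (hsum : ∑ i, a i ≤ ∑ i, k i) (hne : a ≠ k) : ∃ i, a i < k i := by
  by_contra! hka
  exact (Fintype.sum_strictMono (lt_of_le_of_ne hka hne.symm)).not_ge hsum

theorem sum_piFinset_prod_pow_div_prod_sub {F σ : Type*} [Field F] [DecidableEq F]
    [Fintype σ] [DecidableEq σ] (C : σ → Finset F) {a k : σ → ℕ}
    (hC : ∀ i, #(C i) = k i + 1) (hsum : ∑ i, a i ≤ ∑ i, k i) :
    ∑ c ∈ Fintype.piFinset C, (∏ i, c i ^ a i) / ∏ i, ∏ d ∈ (C i).erase (c i), (c i - d) =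
      if a = k then 1 else 0 := by
  simp_rw [← prod_div_distrib]
  rw [← prod_univ_sum C fun i x => x ^ a i / ∏ d ∈ (C i).erase x, (x - d)]
  split_ifs with hak
  · subst hak
    refine prod_eq_one fun i _ => ?_
    rw [sum_pow_div_prod_sub (by rw [hC]; omega), if_pos (hC i).symm]
  · obtain ⟨i, hi⟩ := exists_lt_of_sum_le_of_ne hsum hak
    refine prod_eq_zero (mem_univ i) ?_
    rw [sum_pow_div_prod_sub (by rw [hC]; omega), hC, if_neg (by omega)]

open scoped Classical

/-- The Schauz/Hefetz/Lasoń coefficient formula sharpening the Combinatorial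
Nullstellensatz. -/
theorem stmt5 {F : Type*} [Field F] [DecidableEq F] {n : ℕ}
    (g : MvPolynomial (Fin n) F) (k : Fin n → ℕ)
    (hdeg : ∑ i, k i = g.totalDegree)
    (C : Fin n → Finset F) (hC : ∀ i, (C i).card = k i + 1) :
    g.coeff (Finsupp.equivFunOnFinite.symm k) =
      ∑ c ∈ Fintype.piFinset C,
        (MvPolynomial.eval c g) / ∏ i, ∏ d ∈ (C i).erase (c i), (c i - d) := by
  have hmonomial : ∀ a ∈ g.support,
      ∑ c ∈ Fintype.piFinset C, (∏ i, c i ^ a i) / ∏ i, ∏ d ∈ (C i).erase (c i), (c i - d) =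
        if Finsupp.equivFunOnFinite.symm k = a then 1 else 0 := by
    intro a ha
    have hsum : ∑ i, a i ≤ ∑ i, k i := by
      simpa [hdeg, Finsupp.sum_fintype] using MvPolynomial.le_totalDegree ha
    rw [sum_piFinset_prod_pow_div_prod_sub C hC hsum]
    exact if_congr (by rw [Equiv.symm_apply_eq]; exact eq_comm) rfl rfl
  simp_rw [MvPolynomial.eval_eq', sum_div, mul_div_assoc]
  rw [sum_comm, sum_congr rfl fun a ha => by rw [← mul_sum, hmonomial a ha]]
  simp only [mul_ite, mul_one, mul_zero, sum_ite_eq]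
  split_ifs with hk
  · rfl
  · exact MvPolynomial.notMem_support_iff.mp hk
end

section
/- Let G = K_s ∗ K_{2*t} (the join of a complete graph on s vertices with the complete multipartite graph with t parts of size 2), let A be an (s+t)-clique in G, and let B = V(G) ∖ A. Then G is f-AT whenever f(v) ≥ s + t for all v ∈ A and f(v) ≥ t for all v ∈ B. -/
open scoped Classical

/-- The join `K_s ∗ K_{2*t}` of a complete graph on `s` vertices and the complete
multipartite graph with `t` parts of size 2. -/
def KsJoinK2t (s t : ℕ) : SimpleGraph ((Fin s) ⊕ (Fin t × Fin 2)) :=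
  SimpleGraph.fromRel
    (fun u v => ∀ a b : Fin t × Fin 2, u = Sum.inr a → v = Sum.inr b → a.1 ≠ b.1)

/-!
Let `w r` select the vertex `a_r = (r, w r)` of the `r`-th pair that lies in `A`, and let `b_r`
be the other one. Orient `K_s` transitively, each vertex of `K_s` towards every `b_r`, each `a_r`
towards `K_s`, and the `2t` pair vertices as a circulant tournament. Then every out-degree is
below `s + t`, and it is `t - 1` at each `b_r`.

The difference `eulerEven - eulerOdd` is the coefficient of the out-degree monomial in the arc
polynomial `∏ (x_u - x_v)`. Adding the arcs `a_r → b_r` gives a tournament on all `s + 2t`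
vertices, whose arc polynomial is `±` a Vandermonde determinant. Because `b_r` has exponent
`t - 1`, the identity `x_a^t - x_b^t = (x_a - x_b) ∑_j x_a^j x_b^(t-1-j)` turns the coefficient
into a sum, over `i : Fin t → range t`, of Vandermonde coefficients. The terms with `i`
non-injective vanish. The others all carry the same sign, since they differ by permuting the
pairs simultaneously, and such a permutation is even. So the coefficient is `±t! ≠ 0`.
-/

open Finset MvPolynomial

lemma Finset.card_filter_univ_prod {α β : Type*} [Fintype α] [Fintype β] (P : α × β → Prop)
    [DecidablePred P] : #{p | P p} = ∑ a, #{b | P (a, b)} := by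
  simp only [card_filter, Fintype.sum_prod_type]

lemma Finset.card_filter_univ_sum {α β : Type*} [Fintype α] [Fintype β] (P : α ⊕ β → Prop)
    [DecidablePred P] : #{v | P v} = #{a | P (.inl a)} + #{b | P (.inr b)} := by
  simp only [card_filter, Fintype.sum_sum_type]

lemma Fin.add_one_ne_self_of_two (c : Fin 2) : c + 1 ≠ c := by
  revert c
  decide

lemma Fin.eq_or_eq_add_one_of_two (ε c : Fin 2) : ε = c ∨ ε = c + 1 := by
  revert ε c
  decide

lemma Fin.card_filter_eq_iff_of_two (c : Fin 2) (Q : Prop) [Decidable Q] :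
    #{ε : Fin 2 | ε = c ↔ Q} = 1 := by
  by_cases hQ : Q <;> simp [hQ, filter_ne', filter_eq']

namespace Finsupp

variable {κ σ M : Type*} [AddCommMonoid M] {f : κ → σ}

lemma sum_single_one_apply [DecidableEq σ] (F : Finset κ) (v : σ) :
    (∑ e ∈ F, single (f e) 1) v = #{e ∈ F | f e = v} := by
  rw [Finset.sum_apply', card_filter]
  simp only [single_apply]

variable [Fintype κ]

lemma sum_single_apply_of_injective (hf : Function.Injective f) (x : κ → M) (r : κ) :
    (∑ r', single (f r') (x r')) (f r) = x r := by
  simp [Finset.sum_apply', single_apply, hf.eq_iff]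

lemma sum_single_apply_of_notMem (x : κ → M) {v : σ} (hv : v ∉ Set.range f) :
    (∑ r', single (f r') (x r')) v = 0 := by
  rw [Finset.sum_apply']
  exact Finset.sum_eq_zero fun r _ => single_eq_of_ne fun h => hv ⟨r, h.symm⟩

end Finsupp

namespace MvPolynomial

variable {σ κ R : Type*} [CommRing R]

lemma prod_X_eq_monomial (F : Finset κ) (f : κ → σ) :
    ∏ e ∈ F, (X (f e) : MvPolynomial σ R) =
      monomial (∑ e ∈ F, Finsupp.single (f e) 1) 1 := by
  rw [monomial_sum_one]
  rfl

lemma coeff_add_single_eq_coeff_mul_X_pow_sub_X_pow {a b : σ} (hab : a ≠ b)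
    {ν : σ →₀ ℕ} (hν : ν b = 0) (m : ℕ) (Q : MvPolynomial σ R) :
    coeff (ν + Finsupp.single b m) Q =
      coeff (ν + Finsupp.single a (m + 1) + Finsupp.single b m)
        (Q * (X a ^ (m + 1) - X b ^ (m + 1))) := by
  rw [mul_sub, coeff_sub, X_pow_eq_monomial, X_pow_eq_monomial, add_right_comm,
    coeff_mul_monomial, mul_one, coeff_mul_monomial', if_neg, sub_zero]
  intro h
  simpa [hν, hab] using h b

section Pairs

variable [DecidableEq κ] {a b : κ → σ}

lemma coeff_add_sum_single_eq_coeff_mul_prod (hab : Function.Injective (Sum.elim a b)) (m : ℕ)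
    (Q : MvPolynomial σ R) (S : Finset κ) (ν : σ →₀ ℕ) (hν : ∀ r ∈ S, ν (b r) = 0) :
    coeff (ν + ∑ r ∈ S, Finsupp.single (b r) m) Q =
      coeff (ν + ∑ r ∈ S, (Finsupp.single (a r) (m + 1) + Finsupp.single (b r) m))
        (Q * ∏ r ∈ S, (X (a r) ^ (m + 1) - X (b r) ^ (m + 1))) := by
  obtain ⟨-, hb, hab⟩ := Sum.elim_injective.1 hab
  induction S using Finset.induction_on generalizing ν with
  | empty => simp
  | @insert r₀ S hr₀ ih =>
    have hν' : ∀ r ∈ S, (ν + Finsupp.single (b r₀) m) (b r) = 0 := fun r hr => by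
      simp [hν r (mem_insert_of_mem hr), hb.ne (ne_of_mem_of_not_mem hr hr₀).symm]
    have hν'' : (ν + ∑ r ∈ S, (Finsupp.single (a r) (m + 1) + Finsupp.single (b r) m))
        (b r₀) = 0 := by
      simp [hν r₀ (mem_insert_self r₀ S), Finsupp.single_apply, hab, hb.eq_iff, hr₀]
    calc coeff (ν + ∑ r ∈ insert r₀ S, Finsupp.single (b r) m) Q
        = coeff ((ν + Finsupp.single (b r₀) m) + ∑ r ∈ S, Finsupp.single (b r) m) Q := by
          rw [sum_insert hr₀, add_assoc]
      _ = coeff ((ν + ∑ r ∈ S, (Finsupp.single (a r) (m + 1) + Finsupp.single (b r) m)) +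
            Finsupp.single (b r₀) m)
            (Q * ∏ r ∈ S, (X (a r) ^ (m + 1) - X (b r) ^ (m + 1))) := by
          rw [ih _ hν', add_right_comm]
      _ = _ := coeff_add_single_eq_coeff_mul_X_pow_sub_X_pow (hab r₀ r₀) hν'' m _
      _ = _ := by
          rw [sum_insert hr₀, prod_insert hr₀]
          congr 1
          · abel
          · ring

theorem coeff_add_sum_single_eq_sum_coeff_mul_prod_X_sub_X [Fintype κ]
    (hab : Function.Injective (Sum.elim a b)) (m : ℕ) (Q : MvPolynomial σ R) (ν : σ →₀ ℕ)
    (hν : ∀ r, ν (b r) = 0) :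
    coeff (ν + ∑ r, Finsupp.single (b r) m) Q =
      ∑ i ∈ Fintype.piFinset fun _ => range (m + 1),
        coeff (ν + ∑ r, (Finsupp.single (a r) (m + 1 - i r) + Finsupp.single (b r) (i r)))
          (Q * ∏ r, (X (a r) - X (b r))) := by
  have hgeom : ∏ r, (X (a r) ^ (m + 1) - X (b r) ^ (m + 1) : MvPolynomial σ R) =
      (∏ r, (X (a r) - X (b r))) * ∑ i ∈ Fintype.piFinset fun _ => range (m + 1),
        monomial (∑ r, (Finsupp.single (a r) (i r) + Finsupp.single (b r) (m - i r))) 1 := by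
    simp_rw [← geom_sum₂_mul, prod_mul_distrib, prod_univ_sum, mul_comm]
    refine congrArg _ (sum_congr rfl fun i _ => ?_)
    rw [monomial_sum_one]
    refine prod_congr rfl fun r _ => ?_
    rw [X_pow_eq_monomial, X_pow_eq_monomial, monomial_mul, one_mul, Nat.add_sub_cancel]
  rw [coeff_add_sum_single_eq_coeff_mul_prod hab m Q univ ν (fun r _ => hν r), hgeom,
    ← mul_assoc, mul_sum, coeff_sum]
  refine sum_congr rfl fun i hi => ?_
  have hi : ∀ r, i r ≤ m := fun r =>
    Nat.lt_succ_iff.1 (mem_range.1 (Fintype.mem_piFinset.1 hi r))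
  have hsplit : ν + ∑ r, (Finsupp.single (a r) (m + 1) + Finsupp.single (b r) m) =
      (ν + ∑ r, (Finsupp.single (a r) (m + 1 - i r) + Finsupp.single (b r) (i r))) +
        ∑ r, (Finsupp.single (a r) (i r) + Finsupp.single (b r) (m - i r)) := by
    rw [add_assoc, ← sum_add_distrib]
    refine congrArg _ (sum_congr rfl fun r _ => ?_)
    rw [add_add_add_comm, ← Finsupp.single_add, ← Finsupp.single_add,
      Nat.sub_add_cancel (by have := hi r; omega), Nat.add_sub_cancel' (hi r)]
  rw [hsplit, coeff_mul_monomial, mul_one]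

end Pairs

section Vandermonde

variable {n : ℕ}

noncomputable def vandermonde (e : σ ≃ Fin n) : MvPolynomial σ ℤ :=
  (Matrix.vandermonde fun j => X (e.symm j)).det

lemma sum_single_val_apply [DecidableEq σ] (g : Fin n ≃ σ) (v : σ) :
    (∑ j, Finsupp.single (g j) (j : ℕ)) v = g.symm v := by
  rw [Finset.sum_apply', sum_eq_single (g.symm v)]
  · simp
  · intro j _ hj
    rw [Finsupp.single_apply, if_neg]
    rintro rfl
    exact hj (g.symm_apply_apply j).symm
  · simp

lemma coeff_vandermonde [DecidableEq σ] (e : σ ≃ Fin n) (d : σ →₀ ℕ) :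
    coeff d (vandermonde e) =
      ∑ π : Equiv.Perm (Fin n),
        if ∀ v, d v = π.symm (e v) then (Equiv.Perm.sign π : ℤ) else 0 := by
  rw [vandermonde, Matrix.det_apply, coeff_sum]
  refine sum_congr rfl fun π _ => ?_
  have hmono : ∏ j, Matrix.vandermonde (fun j => (X (e.symm j) : MvPolynomial σ ℤ)) (π j) j =
      monomial (∑ j, Finsupp.single ((π.trans e.symm) j) (j : ℕ)) 1 := by
    rw [monomial_sum_one]
    exact prod_congr rfl fun j _ => X_pow_eq_monomial
  rw [hmono, Units.smul_def, coeff_smul, coeff_monomial]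
  have hexp : ∑ j, Finsupp.single ((π.trans e.symm) j) (j : ℕ) = d ↔
      ∀ v, d v = π.symm (e v) := by
    rw [Finsupp.ext_iff]
    refine forall_congr' fun v => ?_
    rw [sum_single_val_apply, eq_comm]
    simp
  simp only [hexp]
  split_ifs <;> simp

lemma coeff_vandermonde_of_equiv [DecidableEq σ] (e g : σ ≃ Fin n) {d : σ →₀ ℕ}
    (hd : ∀ v, d v = g v) : coeff d (vandermonde e) = Equiv.Perm.sign (g.symm.trans e) := by
  rw [coeff_vandermonde, sum_eq_single (g.symm.trans e)]
  · simp [hd]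
  · intro π _ hπ
    rw [if_neg]
    intro h
    apply hπ
    apply Equiv.symm_bijective.injective
    ext j
    obtain ⟨v, rfl⟩ := e.surjective j
    simpa [← hd] using (h v).symm
  · simp

lemma coeff_vandermonde_of_not_injective [DecidableEq σ] (e : σ ≃ Fin n) {d : σ →₀ ℕ}
    (hd : ¬ Function.Injective d) : coeff d (vandermonde e) = 0 := by
  rw [coeff_vandermonde]
  refine sum_eq_zero fun π _ => if_neg fun h => hd fun u v huv => ?_
  rw [h u, h v] at huv
  exact e.injective (π.symm.injective (Fin.val_injective huv))

end Vandermonde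

end MvPolynomial

namespace Equiv.Perm

variable {κ σ : Type*} {a b : κ → σ}

noncomputable def pairPerm (hab : Function.Injective (Sum.elim a b)) (π : Perm κ) : Perm σ :=
  π.extendDomain (Equiv.ofInjective a (Sum.elim_injective.1 hab).1) *
    π.extendDomain (Equiv.ofInjective b (Sum.elim_injective.1 hab).2.1)

variable (hab : Function.Injective (Sum.elim a b)) (π : Perm κ)

lemma extendDomain_ofInjective_apply {f : κ → σ} (hf : Function.Injective f) (r : κ) :
    π.extendDomain (Equiv.ofInjective f hf) (f r) = f (π r) :=
  π.extendDomain_apply_image (Equiv.ofInjective f hf) r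

lemma pairPerm_apply_left (r : κ) : pairPerm hab π (a r) = a (π r) := by
  rw [pairPerm, mul_apply, extendDomain_apply_not_subtype _ _ (b := a r),
    extendDomain_ofInjective_apply]
  rintro ⟨r', h⟩
  exact (Sum.elim_injective.1 hab).2.2 r r' h.symm

lemma pairPerm_apply_right (r : κ) : pairPerm hab π (b r) = b (π r) := by
  rw [pairPerm, mul_apply, extendDomain_ofInjective_apply, extendDomain_apply_not_subtype]
  rintro ⟨r', h⟩
  exact (Sum.elim_injective.1 hab).2.2 r' (π r) h

lemma pairPerm_apply_of_notMem {v : σ} (ha : v ∉ Set.range a) (hb : v ∉ Set.range b) :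
    pairPerm hab π v = v := by
  rw [pairPerm, mul_apply, extendDomain_apply_not_subtype _ _ hb,
    extendDomain_apply_not_subtype _ _ ha]

lemma sign_pairPerm [Fintype κ] [DecidableEq κ] [Fintype σ] [DecidableEq σ] :
    sign (pairPerm hab π) = 1 := by
  rw [pairPerm, map_mul, sign_extendDomain, sign_extendDomain, Int.units_mul_self]

end Equiv.Perm

namespace BK

variable {V : Type*}

noncomputable def arcPoly (D : Finset (V × V)) : MvPolynomial V ℤ :=
  ∏ e ∈ D, (X e.1 - X e.2)

lemma arcPoly_eq_sum_powerset [DecidableEq V] (D : Finset (V × V)) :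
    arcPoly D = ∑ S ∈ D.powerset, monomial
      (∑ e ∈ S, Finsupp.single e.2 1 + ∑ e ∈ D \ S, Finsupp.single e.1 1) ((-1) ^ #S) := by
  rw [arcPoly, Finset.prod_congr rfl fun e _ => sub_eq_neg_add (X e.1) (X e.2), prod_add]
  refine sum_congr rfl fun S _ => ?_
  rw [prod_neg, prod_X_eq_monomial, prod_X_eq_monomial, mul_assoc, monomial_mul, mul_one,
    show (-1 : MvPolynomial V ℤ) ^ #S = C ((-1) ^ #S) by simp, C_mul_monomial, mul_one]

lemma IsOrientation.filter_adj {T : Finset (V × V)} (hT : IsOrientation ⊤ T)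
    (G : SimpleGraph V) : IsOrientation G {p ∈ T | G.Adj p.1 p.2} := by
  refine ⟨fun u v => ?_, fun u v huv hvu => hT.2 u v (mem_filter.1 huv).1 (mem_filter.1 hvu).1⟩
  rw [mem_filter, mem_filter, G.adj_comm v u, ← or_and_right, ← hT.1 u v, SimpleGraph.top_adj]
  exact ⟨fun h => ⟨G.ne_of_adj h, h⟩, And.right⟩

theorem IsOrientation.arcPoly_eq_C_mul_vandermonde {n : ℕ} {T : Finset (V × V)}
    (hT : IsOrientation ⊤ T) (e : V ≃ Fin n) :
    ∃ ε : ℤ, IsUnit ε ∧ arcPoly T = C ε * vandermonde e := by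
  obtain ⟨hadj, hanti⟩ := hT
  have hne : ∀ p ∈ T, e p.1 ≠ e p.2 := fun p hp h =>
    ((SimpleGraph.top_adj _ _).1 ((hadj p.1 p.2).2 (Or.inl hp))) (e.injective h)
  refine ⟨∏ p ∈ T, if e p.1 < e p.2 then -1 else 1, IsUnit.prod_iff.2 fun p _ => ?_, ?_⟩
  · split_ifs <;> simp
  have hsign : ∀ p ∈ T, (X p.1 - X p.2 : MvPolynomial V ℤ) =
      C (if e p.1 < e p.2 then -1 else 1) *
        (X (e.symm (max (e p.1) (e p.2))) - X (e.symm (min (e p.1) (e p.2)))) := by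
    intro p _
    split_ifs with h
    · simp [max_eq_right h.le, min_eq_left h.le]
    · simp [max_eq_left (not_lt.1 h), min_eq_right (not_lt.1 h)]
  rw [arcPoly, prod_congr rfl hsign, prod_mul_distrib, ← map_prod, vandermonde,
    Matrix.det_vandermonde, prod_sigma']
  congr 1
  refine prod_bij (fun p _ => ⟨min (e p.1) (e p.2), max (e p.1) (e p.2)⟩) ?_ ?_ ?_ ?_
  · intro p hp
    simpa [mem_sigma, min_lt_max] using (hne p hp).symm
  · intro p hp q hq h
    simp only [Sigma.mk.inj_iff, heq_eq_eq, min_def, max_def] at h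
    have key : (e p.1 = e q.1 ∧ e p.2 = e q.2) ∨ (e p.1 = e q.2 ∧ e p.2 = e q.1) := by
      have := hne p hp
      have := hne q hq
      split_ifs at h <;> omega
    simp only [e.injective.eq_iff] at key
    rcases key with ⟨h1, h2⟩ | ⟨h1, h2⟩
    · exact Prod.ext h1 h2
    · exact absurd (h1 ▸ h2 ▸ hp) (hanti q.1 q.2 hq)
  · intro x hx
    rw [mem_sigma, mem_Ioi] at hx
    rcases (hadj (e.symm x.2) (e.symm x.1)).1 ((SimpleGraph.top_adj _ _).2
      (e.symm.injective.ne hx.2.ne')) with h | h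
    · exact ⟨_, h, by simp [min_eq_right hx.2.le, max_eq_left hx.2.le]⟩
    · exact ⟨_, h, by simp [min_eq_left hx.2.le, max_eq_right hx.2.le]⟩
  · intro p _
    rfl

variable [DecidableEq V]

lemma outDeg_add_outDeg_sdiff {D S : Finset (V × V)} (h : S ⊆ D) (v : V) :
    outDeg S v + outDeg (D \ S) v = outDeg D v := by
  unfold outDeg
  rw [← card_union_of_disjoint (disjoint_filter_filter disjoint_sdiff), ← filter_union,
    union_sdiff_of_subset h]

variable [Fintype V]

lemma outDeg_filter_univ (P : V × V → Prop) [DecidablePred P] (v : V) :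
    outDeg ({p | P p} : Finset (V × V)) v = #{u | P (v, u)} := by
  rw [outDeg, filter_filter]
  refine card_nbij' Prod.snd (Prod.mk v) ?_ ?_ ?_ ?_ <;> intro p hp <;> simp at hp ⊢
  · exact hp.2 ▸ hp.1
  · exact hp
  · exact Prod.ext hp.2.symm rfl

lemma add_sum_single_eq_outDeg_iff {D S : Finset (V × V)} (hS : S ⊆ D) :
    ∑ e ∈ S, Finsupp.single e.2 1 + ∑ e ∈ D \ S, Finsupp.single e.1 1 =
        Finsupp.equivFunOnFinite.symm (outDeg D) ↔ ∀ v, outDeg S v = inDeg S v := by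
  rw [Finsupp.ext_iff]
  refine forall_congr' fun v => ?_
  rw [Finsupp.add_apply, Finsupp.sum_single_one_apply, Finsupp.sum_single_one_apply,
    Finsupp.coe_equivFunOnFinite_symm, ← outDeg_add_outDeg_sdiff hS v]
  unfold outDeg inDeg
  omega

theorem eulerEven_sub_eulerOdd (D : Finset (V × V)) :
    (eulerEven D : ℤ) - eulerOdd D =
      coeff (Finsupp.equivFunOnFinite.symm (outDeg D)) (arcPoly D) := by
  rw [arcPoly_eq_sum_powerset, coeff_sum]
  have hterm : ∀ S ∈ D.powerset, coeff (Finsupp.equivFunOnFinite.symm (outDeg D))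
      (monomial (∑ e ∈ S, Finsupp.single e.2 1 + ∑ e ∈ D \ S, Finsupp.single e.1 1)
        ((-1) ^ #S)) = if IsEulerianSub D S then (-1) ^ #S else 0 := by
    intro S hS
    rw [mem_powerset] at hS
    simp only [coeff_monomial, add_sum_single_eq_outDeg_iff hS, IsEulerianSub, hS, true_and]
  rw [sum_congr rfl hterm, ← sum_filter, ← sum_filter_add_sum_filter_not _ (fun S => Even #S),
    filter_filter, filter_filter, eulerEven, eulerOdd]
  simp_rw [Nat.not_even_iff_odd]
  rw [sum_eq_card_nsmul fun S hS => (mem_filter.1 hS).2.2.neg_one_pow,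
    sum_eq_card_nsmul fun S hS => (mem_filter.1 hS).2.2.neg_one_pow]
  simp [sub_eq_add_neg]

end BK

namespace KsJoinK2t

variable {s t : ℕ}

@[simp] lemma adj_inl_inl {k j : Fin s} :
    (KsJoinK2t s t).Adj (.inl k) (.inl j) ↔ k ≠ j := by
  simp [KsJoinK2t]

@[simp] lemma adj_inl_inr {k : Fin s} {y : Fin t × Fin 2} :
    (KsJoinK2t s t).Adj (.inl k) (.inr y) := by
  simp [KsJoinK2t]

@[simp] lemma adj_inr_inl {x : Fin t × Fin 2} {k : Fin s} :
    (KsJoinK2t s t).Adj (.inr x) (.inl k) := by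
  simp [KsJoinK2t]

@[simp] lemma adj_inr_inr {x y : Fin t × Fin 2} :
    (KsJoinK2t s t).Adj (.inr x) (.inr y) ↔ x.1 ≠ y.1 := by
  simp only [KsJoinK2t, SimpleGraph.fromRel_adj, ne_eq, Sum.inr.injEq]
  refine ⟨fun ⟨_, h⟩ => h.elim (· x y rfl rfl) fun h e => h y x rfl rfl e.symm,
    fun h => ⟨fun e => h (congrArg Prod.fst e), .inl fun a b ha hb => ha ▸ hb ▸ h⟩⟩

lemma sumMap_ne_of_adj {u v : Fin s ⊕ Fin t × Fin 2} (h : (KsJoinK2t s t).Adj u v) :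
    Sum.map id Prod.fst u ≠ Sum.map id Prod.fst v := by
  rcases u with k | x <;> rcases v with j | y
  · simpa using h
  · simp
  · simp
  · simpa using h

lemma exists_section_of_isClique {A : Finset (Fin s ⊕ Fin t × Fin 2)}
    (hA : (KsJoinK2t s t).IsClique ↑A) (hcard : #A = s + t) :
    (∀ k, .inl k ∈ A) ∧ ∃ w : Fin t → Fin 2, ∀ r, .inr (r, w r) ∈ A := by
  have hinj : Set.InjOn (Sum.map id Prod.fst) ↑A := fun u hu v hv h =>
    by_contra fun hne => sumMap_ne_of_adj (hA hu hv hne) h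
  have himg : A.image (Sum.map id Prod.fst) = univ :=
    eq_univ_of_card _ (by rw [card_image_of_injOn hinj, hcard]; simp)
  have hsurj : ∀ x, ∃ v ∈ A, Sum.map id Prod.fst v = x := fun x =>
    mem_image.1 (himg ▸ mem_univ x)
  refine ⟨fun k => ?_, ?_⟩
  · obtain ⟨k' | z, hv, h⟩ := hsurj (.inl k)
    · simp only [Sum.map_inl, id, Sum.inl.injEq] at h
      exact h ▸ hv
    · simp at h
  · have : ∀ r, ∃ ε, (.inr (r, ε) : Fin s ⊕ Fin t × Fin 2) ∈ A := fun r => by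
      obtain ⟨k | z, hv, h⟩ := hsurj (.inr r)
      · simp at h
      · simp only [Sum.map_inr, Sum.inr.injEq] at h
        exact ⟨z.2, h ▸ hv⟩
    choose w hw using this
    exact ⟨w, hw⟩

variable (w : Fin t → Fin 2)

def aVert (r : Fin t) : Fin s ⊕ Fin t × Fin 2 := .inr (r, w r)

def bVert (r : Fin t) : Fin s ⊕ Fin t × Fin 2 := .inr (r, w r + 1)

lemma injective_sumElim_aVert_bVert :
    Function.Injective (Sum.elim (aVert (s := s) w) (bVert w)) := by
  refine Sum.elim_injective.2 ⟨fun r r' h => ?_, fun r r' h => ?_, fun r r' h => ?_⟩ <;>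
    simp only [aVert, bVert, Sum.inr.injEq, Prod.mk.injEq] at h
  · exact h.1
  · exact h.1
  · exact Fin.add_one_ne_self_of_two (w r') (h.1 ▸ h.2).symm

lemma aVert_injective : Function.Injective (aVert (s := s) w) :=
  (Sum.elim_injective.1 (injective_sumElim_aVert_bVert w)).1

lemma bVert_injective : Function.Injective (bVert (s := s) w) :=
  (Sum.elim_injective.1 (injective_sumElim_aVert_bVert w)).2.1

lemma aVert_notMem_range_bVert (r : Fin t) : aVert (s := s) w r ∉ Set.range (bVert w) :=
  fun ⟨_, h⟩ => (Sum.elim_injective.1 (injective_sumElim_aVert_bVert w)).2.2 _ _ h.symm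

lemma bVert_notMem_range_aVert (r : Fin t) : bVert (s := s) w r ∉ Set.range (aVert w) :=
  fun ⟨_, h⟩ => (Sum.elim_injective.1 (injective_sumElim_aVert_bVert w)).2.2 _ _ h

lemma inl_notMem_range_aVert (k : Fin s) : .inl k ∉ Set.range (aVert w) := by
  simp [aVert]

lemma inl_notMem_range_bVert (k : Fin s) : .inl k ∉ Set.range (bVert w) := by
  simp [bVert]

lemma vertex_cases (v : Fin s ⊕ Fin t × Fin 2) :
    (∃ k, v = .inl k) ∨ (∃ r, v = aVert w r) ∨ ∃ r, v = bVert w r := by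
  rcases v with k | z
  · exact .inl ⟨k, rfl⟩
  · rcases Fin.eq_or_eq_add_one_of_two z.2 (w z.1) with h | h
    · exact .inr (.inl ⟨z.1, congrArg _ (Prod.ext rfl h)⟩)
    · exact .inr (.inr ⟨z.1, congrArg _ (Prod.ext rfl h)⟩)

/-- On the pair vertices this is the circulant tournament with `a_r` at position `r` and `b_r`
at position `r + t` of a `2t`-cycle, each vertex beating the next `t - 1` positions, together
with the arcs `a_r → b_r`. -/
def Beats : Fin s ⊕ Fin t × Fin 2 → Fin s ⊕ Fin t × Fin 2 → Prop
  | .inl k, .inl j => j < k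
  | .inl _, .inr y => y.2 ≠ w y.1
  | .inr x, .inl _ => x.2 = w x.1
  | .inr x, .inr y => (x.1 = y.1 ∧ x.2 = w x.1 ∧ y.2 ≠ w y.1) ∨
      (x.1 ≠ y.1 ∧ (x.1 < y.1 ↔ (x.2 = w x.1 ↔ y.2 = w y.1)))

noncomputable def tournament : Finset ((Fin s ⊕ Fin t × Fin 2) × (Fin s ⊕ Fin t × Fin 2)) :=
  {p | Beats w p.1 p.2}

noncomputable def orientation : Finset ((Fin s ⊕ Fin t × Fin 2) × (Fin s ⊕ Fin t × Fin 2)) :=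
  {p ∈ tournament w | (KsJoinK2t s t).Adj p.1 p.2}

@[simp] lemma mem_tournament {p : (Fin s ⊕ Fin t × Fin 2) × (Fin s ⊕ Fin t × Fin 2)} :
    p ∈ tournament w ↔ Beats w p.1 p.2 := by
  simp [tournament]

lemma isOrientation_top_tournament : BK.IsOrientation ⊤ (tournament (s := s) w) := by
  refine ⟨fun u v => ?_, fun u v => ?_⟩
  · rcases u with k | ⟨r, ε⟩ <;> rcases v with j | ⟨r', ε'⟩ <;> simp [Beats]
    · exact ne_comm
    · exact em' _
    · exact em _
    · rcases eq_or_ne r r' with rfl | hr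
      · simp only [true_implies, true_and, not_true, false_and, or_false]
        generalize w r = c
        revert ε ε' c
        decide
      · simp only [hr, hr.symm, false_implies, true_iff, false_and, false_or, not_false_eq_true,
          true_and]
        rcases lt_or_gt_of_ne hr with h | h <;> simp [h, h.not_gt] <;> tauto
  · rcases u with k | ⟨r, ε⟩ <;> rcases v with j | ⟨r', ε'⟩ <;> simp [Beats]
    · exact le_of_lt
    · rcases eq_or_ne r r' with rfl | hr
      · tauto
      · rcases lt_or_gt_of_ne hr with h | h <;> simp [hr, hr.symm, h, h.not_gt] <;> tauto

lemma isOrientation_orientation : BK.IsOrientation (KsJoinK2t s t) (orientation w) :=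
  (isOrientation_top_tournament w).filter_adj _

lemma filter_not_adj_tournament :
    {p ∈ tournament w | ¬(KsJoinK2t s t).Adj p.1 p.2} =
      univ.image fun r => (aVert w r, bVert w r) := by
  ext ⟨u, v⟩
  simp only [mem_filter, mem_tournament, mem_image, mem_univ, true_and, Prod.mk.injEq]
  rcases u with k | x <;> rcases v with j | y
  · simpa [Beats, aVert] using fun h => h.ne'
  · simp [aVert]
  · simp [bVert]
  · simp only [Beats, aVert, bVert, Sum.inr.injEq, adj_inr_inr, not_not]
    constructor
    · rintro ⟨⟨hr, hx, hy⟩ | ⟨hr, -⟩, hr'⟩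
      · exact ⟨x.1, Prod.ext rfl hx.symm,
          Prod.ext hr ((Fin.eq_or_eq_add_one_of_two _ _).resolve_left hy ▸ hr ▸ rfl)⟩
      · exact absurd hr' hr
    · rintro ⟨r, rfl, rfl⟩
      exact ⟨.inl ⟨rfl, rfl, Fin.add_one_ne_self_of_two (w r)⟩, rfl⟩

lemma arcPoly_tournament :
    BK.arcPoly (tournament (s := s) w) =
      BK.arcPoly (orientation w) * ∏ r, (X (aVert w r) - X (bVert w r)) := by
  rw [BK.arcPoly, ← prod_filter_mul_prod_filter_not (tournament w)
    fun p => (KsJoinK2t s t).Adj p.1 p.2, filter_not_adj_tournament, prod_image]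
  · rfl
  · exact fun r _ r' _ h => aVert_injective w (congrArg Prod.fst h)

lemma outDeg_orientation_eq_card (v : Fin s ⊕ Fin t × Fin 2) :
    BK.outDeg (orientation w) v = #{u | Beats w v u ∧ (KsJoinK2t s t).Adj v u} := by
  rw [orientation, tournament, filter_filter, BK.outDeg_filter_univ]

lemma outDeg_orientation_inl (k : Fin s) :
    BK.outDeg (orientation w) (.inl k) = k + t := by
  rw [outDeg_orientation_eq_card, card_filter_univ_sum, card_filter_univ_prod]
  simp only [Beats, adj_inl_inl, adj_inl_inr, and_true]
  have hlt : ({j | j < k ∧ k ≠ j} : Finset (Fin s)) = Iio k := by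
    ext j
    simpa using ne_of_gt
  simp [hlt, filter_ne']

lemma outDeg_orientation_inr (z : Fin t × Fin 2) :
    BK.outDeg (orientation (s := s) w) (.inr z) = (if z.2 = w z.1 then s else 0) + (t - 1) := by
  rw [outDeg_orientation_eq_card, card_filter_univ_sum, card_filter_univ_prod]
  simp only [Beats, adj_inr_inl, adj_inr_inr, and_true]
  have hrow : ∀ r', #{ε : Fin 2 | (z.1 = r' ∧ z.2 = w z.1 ∧ ε ≠ w r' ∨
      z.1 ≠ r' ∧ (z.1 < r' ↔ (z.2 = w z.1 ↔ ε = w r'))) ∧ z.1 ≠ r'} =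
        if r' ≠ z.1 then 1 else 0 := by
    intro r'
    rcases eq_or_ne r' z.1 with rfl | hr
    · simp
    · rw [if_pos hr, ← Fin.card_filter_eq_iff_of_two (w r') (z.1 < r' ↔ z.2 = w z.1)]
      congr 1
      ext ε
      simp only [mem_filter, mem_univ, true_and, hr.symm, false_and, false_or, ne_eq,
        not_false_eq_true, and_true]
      tauto
  rw [sum_congr rfl fun r' _ => hrow r', sum_boole, filter_ne', card_erase_of_mem (mem_univ _),
    card_univ, Fintype.card_fin]
  split_ifs with h <;> simp [h]

lemma outDeg_orientation_aVert (r : Fin t) :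
    BK.outDeg (orientation (s := s) w) (aVert w r) = s + t - 1 := by
  rw [aVert, outDeg_orientation_inr, if_pos rfl]
  have := r.pos
  omega

lemma outDeg_orientation_bVert (r : Fin t) :
    BK.outDeg (orientation (s := s) w) (bVert w r) = t - 1 := by
  rw [bVert, outDeg_orientation_inr, if_neg (Fin.add_one_ne_self_of_two _), zero_add]

def baseExp : Fin s ⊕ Fin t × Fin 2 → ℕ
  | .inl k => k + t
  | .inr z => if z.2 = w z.1 then s + t - 1 else 0

def shiftedExp (i : Fin t → ℕ) : Fin s ⊕ Fin t × Fin 2 → ℕ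
  | .inl k => k + t
  | .inr z => if z.2 = w z.1 then s + 2 * t - 1 - i z.1 else i z.1

@[simp] lemma baseExp_aVert (r : Fin t) : baseExp (s := s) w (aVert w r) = s + t - 1 := by
  simp [baseExp, aVert]

@[simp] lemma baseExp_bVert (r : Fin t) : baseExp (s := s) w (bVert w r) = 0 := by
  simp [baseExp, bVert]

@[simp] lemma shiftedExp_inl (i : Fin t → ℕ) (k : Fin s) : shiftedExp w i (.inl k) = k + t :=
  rfl

@[simp] lemma shiftedExp_aVert (i : Fin t → ℕ) (r : Fin t) :
    shiftedExp (s := s) w i (aVert w r) = s + 2 * t - 1 - i r := by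
  simp [shiftedExp, aVert]

@[simp] lemma shiftedExp_bVert (i : Fin t → ℕ) (r : Fin t) :
    shiftedExp (s := s) w i (bVert w r) = i r := by
  simp [shiftedExp, bVert]

lemma equivFunOnFinite_symm_outDeg_orientation :
    Finsupp.equivFunOnFinite.symm (BK.outDeg (orientation (s := s) w)) =
      Finsupp.equivFunOnFinite.symm (baseExp w) + ∑ r, Finsupp.single (bVert w r) (t - 1) := by
  ext v
  rw [Finsupp.add_apply, Finsupp.coe_equivFunOnFinite_symm, Finsupp.coe_equivFunOnFinite_symm]
  rcases vertex_cases w v with ⟨k, rfl⟩ | ⟨r, rfl⟩ | ⟨r, rfl⟩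
  · rw [Finsupp.sum_single_apply_of_notMem _ (inl_notMem_range_bVert w k),
      outDeg_orientation_inl]
    rfl
  · rw [Finsupp.sum_single_apply_of_notMem _ (aVert_notMem_range_bVert w r),
      outDeg_orientation_aVert, baseExp_aVert, add_zero]
  · rw [Finsupp.sum_single_apply_of_injective (bVert_injective w), outDeg_orientation_bVert,
      baseExp_bVert, zero_add]

lemma coe_baseExp_add_sum_single (i : Fin t → ℕ) (hi : ∀ r, i r < t) :
    ⇑(Finsupp.equivFunOnFinite.symm (baseExp w) +
      ∑ r, (Finsupp.single (aVert w r) (t - 1 + 1 - i r) + Finsupp.single (bVert w r) (i r))) =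
        shiftedExp (s := s) w i := by
  funext v
  rw [Finsupp.add_apply, Finsupp.coe_equivFunOnFinite_symm, sum_add_distrib, Finsupp.add_apply]
  rcases vertex_cases w v with ⟨k, rfl⟩ | ⟨r, rfl⟩ | ⟨r, rfl⟩
  · rw [Finsupp.sum_single_apply_of_notMem _ (inl_notMem_range_aVert w k),
      Finsupp.sum_single_apply_of_notMem _ (inl_notMem_range_bVert w k)]
    rfl
  · rw [Finsupp.sum_single_apply_of_injective (aVert_injective w),
      Finsupp.sum_single_apply_of_notMem _ (aVert_notMem_range_bVert w r), baseExp_aVert,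
      shiftedExp_aVert]
    have := hi r
    omega
  · rw [Finsupp.sum_single_apply_of_injective (bVert_injective w),
      Finsupp.sum_single_apply_of_notMem _ (bVert_notMem_range_aVert w r), baseExp_bVert,
      shiftedExp_bVert, zero_add, zero_add]

lemma shiftedExp_lt {i : Fin t → ℕ} (hi : ∀ r, i r < t) (v : Fin s ⊕ Fin t × Fin 2) :
    shiftedExp w i v < s + 2 * t := by
  rcases vertex_cases w v with ⟨k, rfl⟩ | ⟨r, rfl⟩ | ⟨r, rfl⟩
  · simp only [shiftedExp_inl]
    omega
  · simp only [shiftedExp_aVert]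
    have := r.pos
    omega
  · simp only [shiftedExp_bVert]
    exact (hi r).trans_le (by omega)

lemma shiftedExp_injective {i : Fin t → ℕ} (hi : ∀ r, i r < t) (hinj : Function.Injective i) :
    Function.Injective (shiftedExp (s := s) w i) := by
  intro u v h
  rcases vertex_cases w u with ⟨x, rfl⟩ | ⟨x, rfl⟩ | ⟨x, rfl⟩ <;>
  rcases vertex_cases w v with ⟨y, rfl⟩ | ⟨y, rfl⟩ | ⟨y, rfl⟩ <;>
  simp only [shiftedExp_inl, shiftedExp_aVert, shiftedExp_bVert] at h <;>
  have := x.isLt <;> have := y.isLt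
  all_goals first
    | exact congrArg _ (Fin.ext (by omega))
    | exact congrArg _ (hinj (by have := hi x; have := hi y; omega))
    | (have := hi x; omega)
    | (have := hi y; omega)
    | (have := hi x; have := hi y; omega)

noncomputable def shiftedExpEquiv : (Fin s ⊕ Fin t × Fin 2) ≃ Fin (s + 2 * t) :=
  Equiv.ofBijective
    (fun v => ⟨shiftedExp w (fun r => r) v, shiftedExp_lt w (fun r => r.isLt) v⟩)
    ((Fintype.bijective_iff_injective_and_card _).2
      ⟨fun _ _ h => shiftedExp_injective w (fun r => r.isLt) Fin.val_injective
        (congrArg Fin.val h), by simp; omega⟩)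

lemma shiftedExp_eq_shiftedExpEquiv_pairPerm (π : Equiv.Perm (Fin t))
    (v : Fin s ⊕ Fin t × Fin 2) :
    shiftedExp w (fun r => π r) v =
      shiftedExpEquiv w (Equiv.Perm.pairPerm (injective_sumElim_aVert_bVert w) π v) := by
  rcases vertex_cases w v with ⟨k, rfl⟩ | ⟨r, rfl⟩ | ⟨r, rfl⟩
  · rw [Equiv.Perm.pairPerm_apply_of_notMem _ _ (inl_notMem_range_aVert w k)
      (inl_notMem_range_bVert w k)]
    rfl
  · rw [Equiv.Perm.pairPerm_apply_left]
    simp [shiftedExpEquiv]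
  · rw [Equiv.Perm.pairPerm_apply_right]
    simp [shiftedExpEquiv]

lemma coeff_vandermonde_shiftedExpEquiv {i : Fin t → ℕ} (hi : ∀ r, i r < t)
    {d : (Fin s ⊕ Fin t × Fin 2) →₀ ℕ} (hd : ⇑d = shiftedExp w i) :
    coeff d (vandermonde (shiftedExpEquiv w)) = if Function.Injective i then 1 else 0 := by
  split_ifs with hinj
  · set π : Equiv.Perm (Fin t) := Equiv.ofBijective (fun r => ⟨i r, hi r⟩)
      (Finite.injective_iff_bijective.1 fun r r' h => hinj (congrArg Fin.val h))
    set τ := Equiv.Perm.pairPerm (injective_sumElim_aVert_bVert w) π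
    rw [coeff_vandermonde_of_equiv (shiftedExpEquiv w) (τ.trans (shiftedExpEquiv w))
      fun v => hd ▸ shiftedExp_eq_shiftedExpEquiv_pairPerm w π v, Equiv.symm_trans,
      Equiv.Perm.sign_symm_trans_trans, Equiv.Perm.sign_symm, Equiv.Perm.sign_pairPerm]
    rfl
  · obtain ⟨r, r', hrr', hne⟩ : ∃ r r', i r = i r' ∧ r ≠ r' := by
      simpa [Function.Injective] using hinj
    refine coeff_vandermonde_of_not_injective _ fun h => hne (aVert_injective w (h ?_))
    simp [hd, hrr']

theorem coeff_arcPoly_orientation_ne_zero :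
    coeff (Finsupp.equivFunOnFinite.symm (BK.outDeg (orientation (s := s) w)))
      (BK.arcPoly (orientation w)) ≠ 0 := by
  obtain ⟨ε, hε, hT⟩ :=
    (isOrientation_top_tournament (s := s) w).arcPoly_eq_C_mul_vandermonde (shiftedExpEquiv w)
  have hbound : ∀ i ∈ Fintype.piFinset fun _ : Fin t => range (t - 1 + 1), ∀ r, i r < t :=
    fun i hi r => by
      have := mem_range.1 (Fintype.mem_piFinset.1 hi r)
      have := r.pos
      omega
  rw [equivFunOnFinite_symm_outDeg_orientation, coeff_add_sum_single_eq_sum_coeff_mul_prod_X_sub_X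
    (injective_sumElim_aVert_bVert w) _ _ _ (baseExp_bVert w), ← arcPoly_tournament, hT]
  simp only [coeff_C_mul]
  rw [← mul_sum, sum_congr rfl fun i hi => coeff_vandermonde_shiftedExpEquiv w (hbound i hi)
    (coe_baseExp_add_sum_single w i (hbound i hi)), sum_boole]
  refine mul_ne_zero hε.ne_zero (Nat.cast_ne_zero.2 (card_ne_zero.2 ⟨fun r => r, ?_⟩))
  simp only [mem_filter, Fintype.mem_piFinset, mem_range]
  exact ⟨fun r => by have := r.isLt; omega, Fin.val_injective⟩

lemma outDeg_orientation_lt {A : Finset (Fin s ⊕ Fin t × Fin 2)}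
    {f : Fin s ⊕ Fin t × Fin 2 → ℕ} (hinl : ∀ k, .inl k ∈ A)
    (haA : ∀ r, aVert w r ∈ A)
    (hfA : ∀ v ∈ A, s + t ≤ f v) (hfB : ∀ v ∉ A, t ≤ f v)
    (v : Fin s ⊕ Fin t × Fin 2) : BK.outDeg (orientation w) v < f v := by
  rcases vertex_cases w v with ⟨k, rfl⟩ | ⟨r, rfl⟩ | ⟨r, rfl⟩
  · have := hfA _ (hinl k)
    rw [outDeg_orientation_inl]
    omega
  · have := hfA _ (haA r)
    rw [outDeg_orientation_aVert]
    have := r.pos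
    omega
  · have : t ≤ f (bVert w r) := by
      by_cases hb : bVert w r ∈ A
      · exact le_add_self.trans (hfA _ hb)
      · exact hfB _ hb
    rw [outDeg_orientation_bVert]
    have := r.pos
    omega

end KsJoinK2t

/-- `K_s ∗ K_{2*t}` is `f`-AT when `f ≥ s + t` on some `(s+t)`-clique `A` and
`f ≥ t` elsewhere. -/
theorem stmt6 (s t : ℕ) (A : Finset ((Fin s) ⊕ (Fin t × Fin 2)))
    (hA : (KsJoinK2t s t).IsClique ↑A) (hcard : A.card = s + t)
    (f : (Fin s) ⊕ (Fin t × Fin 2) → ℕ)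
    (hfA : ∀ v ∈ A, s + t ≤ f v) (hfB : ∀ v ∉ A, t ≤ f v) :
    BK.IsAT (KsJoinK2t s t) f := by
  obtain ⟨hinl, w, haA⟩ := KsJoinK2t.exists_section_of_isClique hA hcard
  refine ⟨KsJoinK2t.orientation w, KsJoinK2t.isOrientation_orientation w,
    KsJoinK2t.outDeg_orientation_lt w hinl haA hfA hfB, fun h => ?_⟩
  apply KsJoinK2t.coeff_arcPoly_orientation_ne_zero (s := s) w
  rw [← BK.eulerEven_sub_eulerOdd, h, sub_self]
end

section
/- Let G be the complement of a bipartite graph with parts A and B, where |A| = ω(G). Then G is a subgraph of K_{|A|−|B|} ∗ K_{2*|B|}, i.e., the complement of G contains a matching saturating B whose edges go between A and B. -/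
open scoped Classical

/-- The clique number of a finite graph. -/
noncomputable def cliqueNum {V : Type*} [Fintype V] [DecidableEq V]
    (G : SimpleGraph V) : ℕ :=
  (Finset.univ.powerset.filter (fun s : Finset V => G.IsClique ↑s)).sup Finset.card

/-! Let `S ⊆ B` and let `N ⊆ A` be the vertices of `A` with a non-neighbour in `S`. The vertices of
`A \ N` are adjacent to all of `S`, so `(A \ N) ∪ S` is a clique and has at most `ω(G) = |A|`
vertices; hence `|S| ≤ |N|`. This is Hall's condition for matching `B` into `A` along
non-edges of `G`. -/

open Finset

theorem Finset.exists_injOn_mem_of_forall_card_le_card_biUnion {α : Type*} [DecidableEq α]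
    (B : Finset α) (t : α → Finset α) (hall : ∀ S ⊆ B, #S ≤ #(S.biUnion t)) :
    ∃ f : α → α, Set.InjOn f B ∧ ∀ b ∈ B, f b ∈ t b := by
  have hall' : ∀ S : Finset B, #S ≤ #(S.biUnion fun b => t b) := fun S => by
    have h := hall (S.map (Function.Embedding.subtype _)) fun _ hx => by
      obtain ⟨b, -, rfl⟩ := mem_map.mp hx
      exact b.2
    rwa [card_map, map_eq_image, image_biUnion] at h
  obtain ⟨g, hg_inj, hg_mem⟩ :=
    (all_card_le_biUnion_card_iff_existsInjective' fun b : B => t b).mp hall'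
  refine ⟨fun a => if h : a ∈ B then g ⟨a, h⟩ else a, fun a ha b hb hab => ?_, fun b hb => ?_⟩
  · rw [mem_coe] at ha hb
    simp only [dif_pos ha, dif_pos hb] at hab
    exact congrArg Subtype.val (hg_inj hab)
  · simpa [dif_pos hb] using hg_mem ⟨b, hb⟩

section

variable {V : Type*} [Fintype V] [DecidableEq V] {G : SimpleGraph V}

theorem card_le_cliqueNum {s : Finset V} (hs : G.IsClique (s : Set V)) : #s ≤ cliqueNum G :=
  Finset.le_sup (f := Finset.card) (by simp [hs])

theorem isClique_filter_forall_adj_union {A S : Finset V} (hA : G.IsClique (A : Set V))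
    (hS : G.IsClique (S : Set V)) :
    G.IsClique ((A.filter fun a => ∀ b ∈ S, G.Adj b a) ∪ S : Finset V) := by
  rw [coe_union, SimpleGraph.isClique_iff, Set.pairwise_union]
  refine ⟨hA.subset (coe_subset.mpr (filter_subset _ _)), hS,
    fun a ha b hb _ => ?_⟩
  have hba := (mem_filter.mp ha).2 b hb
  exact ⟨hba.symm, hba⟩

theorem card_le_card_biUnion_filter_not_adj {A S : Finset V} (hA : G.IsClique (A : Set V))
    (hS : G.IsClique (S : Set V)) (hAS : Disjoint A S) (hω : cliqueNum G ≤ #A) :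
    #S ≤ #(S.biUnion fun b => A.filter fun a => ¬ G.Adj b a) := by
  have hnonadj : (S.biUnion fun b => A.filter fun a => ¬ G.Adj b a) =
      A.filter fun a => ¬ ∀ b ∈ S, G.Adj b a := by
    ext a
    simp only [mem_biUnion, mem_filter]
    grind
  have hclique := card_le_cliqueNum (isClique_filter_forall_adj_union hA hS)
  rw [card_union_of_disjoint (hAS.mono_left (filter_subset _ _))] at hclique
  have hsplit := card_filter_add_card_filter_not (s := A) fun a => ∀ b ∈ S, G.Adj b a
  rw [hnonadj]
  omega

end

theorem stmt8_general {V : Type*} [Fintype V] [DecidableEq V] (G : SimpleGraph V)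
    (A B : Finset V) (hdisj : Disjoint A B)
    (hA : G.IsClique ↑A) (hB : G.IsClique ↑B)
    (homega : A.card = cliqueNum G) :
    ∃ m : V → V, Set.InjOn m ↑B ∧ ∀ b ∈ B, m b ∈ A ∧ ¬ G.Adj b (m b) := by
  obtain ⟨m, hm_inj, hm_mem⟩ := B.exists_injOn_mem_of_forall_card_le_card_biUnion
    (fun b => A.filter fun a => ¬ G.Adj b a) fun S hS =>
      card_le_card_biUnion_filter_not_adj hA (hB.subset (by simpa using hS))
        (hdisj.mono_right hS) homega.ge
  exact ⟨m, hm_inj, fun b hb => mem_filter.mp (hm_mem b hb)⟩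

/-- If `G` is the complement of a bipartite graph with parts `A` and `B` and
`|A| = ω(G)`, then the complement of `G` contains a matching saturating `B`
whose edges go between `A` and `B`; hence `G ⊆ K_{|A|-|B|} ∗ K_{2*|B|}`. -/
theorem stmt8 {V : Type*} [Fintype V] [DecidableEq V] (G : SimpleGraph V)
    (A B : Finset V) (hpart : ∀ v, v ∈ A ∨ v ∈ B) (hdisj : Disjoint A B)
    (hA : G.IsClique ↑A) (hB : G.IsClique ↑B)
    (hsize : B.card ≤ A.card) (homega : A.card = cliqueNum G) :
    ∃ m : V → V, Set.InjOn m ↑B ∧ ∀ b ∈ B, m b ∈ A ∧ ¬ G.Adj b (m b) :=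
  stmt8_general G A B hdisj hA hB homega
end
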